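/- Abstract coercivity lemma (abstract content of the coercivity statement (2.11) in Theorem 2.1): Let U₁, U₂, V, H be real Hilbert spaces, V' the dual of V, and write U := U₁ × U₂ with ‖(u₁,u₂)‖²_U := ‖u₁‖² + ‖u₂‖². Let B : U₁ → V' be a continuous linear map, and let c : U₂ × U₂ → ℝ and d : U × U → ℝ be bilinear forms. Suppose there are continuous linear maps T : U₁ → H and E : H → U₁ with T ∘ E = id_H, and constants C₁, C₂, C₃ > 0 such that for all u = (u₁,u₂) ∈ U: (i) ‖u₁ − E(T u₁)‖_{U₁} ≤ C₁ ‖B u₁‖_{V'}, and (ii) ‖T u₁‖²_H + ‖u₂‖²_{U₂} ≤ C₂ ( c(u₂,u₂) + d(u,u) ) + C₃ ‖B u₁‖_{V'} ‖u‖_U. Then there exist κ₀ > 0 and α > 0 such that for every κ ≥ κ₀ and every u = (u₁,u₂) ∈ U: κ ‖B u₁‖²_{V'} + c(u₂,u₂) + d(u,u) ≥ α ‖u‖²_U. -/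

import Mathlib

/-!
Write `N = ‖u‖_U` and `s = ‖B u₁‖`. Hypothesis (i) splits `u₁` into `E (T u₁)` and a remainder
controlled by `s`, so `N²` is bounded by `s²` plus a multiple of `‖T u₁‖² + ‖u₂‖²`, which (ii)
bounds by `c + d` plus the cross term `s N`. Young's inequality absorbs half of `N²` from the
cross term, leaving `N² ≲ s² + (c + d)`; any `κ` beyond the resulting constant then works.
-/

theorem sq_le_of_sq_le_add_mul_mul {N s a b p : ℝ} (h : N ^ 2 ≤ a * s ^ 2 + b * s * N + p) :
    N ^ 2 ≤ (2 * a + b ^ 2) * s ^ 2 + 2 * p := by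
  nlinarith [sq_nonneg (b * s - N)]

theorem ContinuousLinearMap.sq_norm_le_of_norm_sub_apply_le {H U : Type*}
    [SeminormedAddCommGroup H] [NormedSpace ℝ H] [SeminormedAddCommGroup U] [NormedSpace ℝ U]
    (E : H →L[ℝ] U) {x : U} {h : H} {r : ℝ} (hr : ‖x - E h‖ ≤ r) :
    ‖x‖ ^ 2 ≤ 2 * r ^ 2 + 2 * ‖E‖ ^ 2 * ‖h‖ ^ 2 := by
  have hx : ‖x‖ ≤ r + ‖E‖ * ‖h‖ :=
    calc ‖x‖ = ‖(x - E h) + E h‖ := by rw [sub_add_cancel]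
      _ ≤ ‖x - E h‖ + ‖E h‖ := norm_add_le _ _
      _ ≤ r + ‖E‖ * ‖h‖ := add_le_add hr (E.le_opNorm h)
  have hr₀ : 0 ≤ r := (norm_nonneg _).trans hr
  nlinarith [norm_nonneg x, sq_nonneg (r - ‖E‖ * ‖h‖)]

theorem sq_norm_add_sq_norm_le_of_lift {U₁ U₂ H : Type*}
    [SeminormedAddCommGroup U₁] [NormedSpace ℝ U₁] [SeminormedAddCommGroup U₂]
    [SeminormedAddCommGroup H] [NormedSpace ℝ H]
    (E : H →L[ℝ] U₁) {u₁ : U₁} {u₂ : U₂} {h : H} {s q C₁ C₂ C₃ : ℝ}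
    (hi : ‖u₁ - E h‖ ≤ C₁ * s)
    (hii : ‖h‖ ^ 2 + ‖u₂‖ ^ 2 ≤ C₂ * q + C₃ * s * √(‖u₁‖ ^ 2 + ‖u₂‖ ^ 2)) :
    ‖u₁‖ ^ 2 + ‖u₂‖ ^ 2 ≤
      (4 * C₁ ^ 2 + ((2 * ‖E‖ ^ 2 + 1) * C₃) ^ 2) * s ^ 2 + 2 * ((2 * ‖E‖ ^ 2 + 1) * C₂) * q := by
  set M := 2 * ‖E‖ ^ 2 + 1
  set N := √(‖u₁‖ ^ 2 + ‖u₂‖ ^ 2)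
  have hN : N ^ 2 = ‖u₁‖ ^ 2 + ‖u₂‖ ^ 2 := Real.sq_sqrt (by positivity)
  have hu₁ := E.sq_norm_le_of_norm_sub_apply_le hi
  rw [← hN]
  have key : N ^ 2 ≤ 2 * C₁ ^ 2 * s ^ 2 + M * C₃ * s * N + M * C₂ * q :=
    calc N ^ 2 ≤ 2 * (C₁ * s) ^ 2 + M * (‖h‖ ^ 2 + ‖u₂‖ ^ 2) := by
          nlinarith [sq_nonneg ‖h‖, sq_nonneg ‖E‖]
      _ ≤ 2 * (C₁ * s) ^ 2 + M * (C₂ * q + C₃ * s * N) := by gcongr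
      _ = 2 * C₁ ^ 2 * s ^ 2 + M * C₃ * s * N + M * C₂ * q := by ring
  linarith [sq_le_of_sq_le_add_mul_mul key]

theorem exists_coercive_of_le_mul_sq_add {X : Type*} {N s q : X → ℝ} {K L : ℝ} (hL : 0 < L)
    (h : ∀ x, N x ≤ K * s x ^ 2 + L * q x) :
    ∃ κ₀ > 0, ∃ α > 0, ∀ κ ≥ κ₀, ∀ x, α * N x ≤ κ * s x ^ 2 + q x := by
  refine ⟨max (K / L) 1, by positivity, L⁻¹, inv_pos.2 hL, fun κ hκ x => ?_⟩
  calc L⁻¹ * N x ≤ L⁻¹ * (K * s x ^ 2 + L * q x) := by gcongr; exact h x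
    _ = K / L * s x ^ 2 + q x := by field_simp
    _ ≤ κ * s x ^ 2 + q x := by gcongr; exact (le_max_left _ _).trans hκ

theorem abstract_coercivity_general
    {U₁ U₂ V H : Type*}
    [NormedAddCommGroup U₁] [InnerProductSpace ℝ U₁]
    [NormedAddCommGroup U₂] [InnerProductSpace ℝ U₂]
    [NormedAddCommGroup V] [InnerProductSpace ℝ V]
    [NormedAddCommGroup H] [InnerProductSpace ℝ H]
    (B : U₁ →L[ℝ] StrongDual ℝ V)
    (c : U₂ →ₗ[ℝ] U₂ →ₗ[ℝ] ℝ)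
    (d : (U₁ × U₂) →ₗ[ℝ] (U₁ × U₂) →ₗ[ℝ] ℝ)
    (T : U₁ →L[ℝ] H) (E : H →L[ℝ] U₁)
    (C₁ C₂ C₃ : ℝ) (hC₂ : 0 < C₂)
    (hi : ∀ u₁ : U₁, ‖u₁ - E (T u₁)‖ ≤ C₁ * ‖B u₁‖)
    (hii : ∀ (u₁ : U₁) (u₂ : U₂),
      ‖T u₁‖ ^ 2 + ‖u₂‖ ^ 2 ≤
        C₂ * (c u₂ u₂ + d (u₁, u₂) (u₁, u₂)) +
          C₃ * ‖B u₁‖ * Real.sqrt (‖u₁‖ ^ 2 + ‖u₂‖ ^ 2)) :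
    ∃ κ₀ > 0, ∃ α > 0, ∀ κ ≥ κ₀, ∀ (u₁ : U₁) (u₂ : U₂),
      α * (‖u₁‖ ^ 2 + ‖u₂‖ ^ 2) ≤
        κ * ‖B u₁‖ ^ 2 + c u₂ u₂ + d (u₁, u₂) (u₁, u₂) := by
  obtain ⟨κ₀, hκ₀, α, hα, hcoercive⟩ :=
    exists_coercive_of_le_mul_sq_add (X := U₁ × U₂) (N := fun u => ‖u.1‖ ^ 2 + ‖u.2‖ ^ 2)
      (s := fun u => ‖B u.1‖) (q := fun u => c u.2 u.2 + d u u)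
      (L := 2 * ((2 * ‖E‖ ^ 2 + 1) * C₂)) (by positivity)
      fun u => sq_norm_add_sq_norm_le_of_lift E (hi u.1) (hii u.1 u.2)
  exact ⟨κ₀, hκ₀, α, hα, fun κ hκ u₁ u₂ =>
    (hcoercive κ hκ (u₁, u₂)).trans_eq (add_assoc _ _ _).symm⟩

/-- Abstract coercivity lemma (abstract content of the coercivity statement (2.11) in
Theorem 2.1): on `U := U₁ × U₂` with `‖(u₁,u₂)‖²_U := ‖u₁‖² + ‖u₂‖²`, suppose
`T : U₁ → H`, `E : H → U₁` are continuous linear with `T ∘ E = id`, and constants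
`C₁, C₂, C₃ > 0` satisfy (i) `‖u₁ - E (T u₁)‖ ≤ C₁ ‖B u₁‖_{V'}` and
(ii) `‖T u₁‖² + ‖u₂‖² ≤ C₂ (c(u₂,u₂) + d(u,u)) + C₃ ‖B u₁‖ ‖u‖_U`.
Then there are `κ₀ > 0` and `α > 0` such that for all `κ ≥ κ₀` and all `u = (u₁,u₂)`:
`κ ‖B u₁‖² + c(u₂,u₂) + d(u,u) ≥ α ‖u‖²_U`. -/
theorem abstract_coercivity
    {U₁ U₂ V H : Type*}
    [NormedAddCommGroup U₁] [InnerProductSpace ℝ U₁] [CompleteSpace U₁]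
    [NormedAddCommGroup U₂] [InnerProductSpace ℝ U₂] [CompleteSpace U₂]
    [NormedAddCommGroup V] [InnerProductSpace ℝ V] [CompleteSpace V]
    [NormedAddCommGroup H] [InnerProductSpace ℝ H] [CompleteSpace H]
    (B : U₁ →L[ℝ] StrongDual ℝ V)
    (c : U₂ →ₗ[ℝ] U₂ →ₗ[ℝ] ℝ)
    (d : (U₁ × U₂) →ₗ[ℝ] (U₁ × U₂) →ₗ[ℝ] ℝ)
    (T : U₁ →L[ℝ] H) (E : H →L[ℝ] U₁)
    (hTE : ∀ h : H, T (E h) = h)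
    (C₁ C₂ C₃ : ℝ) (hC₁ : 0 < C₁) (hC₂ : 0 < C₂) (hC₃ : 0 < C₃)
    (hi : ∀ u₁ : U₁, ‖u₁ - E (T u₁)‖ ≤ C₁ * ‖B u₁‖)
    (hii : ∀ (u₁ : U₁) (u₂ : U₂),
      ‖T u₁‖ ^ 2 + ‖u₂‖ ^ 2 ≤
        C₂ * (c u₂ u₂ + d (u₁, u₂) (u₁, u₂)) +
          C₃ * ‖B u₁‖ * Real.sqrt (‖u₁‖ ^ 2 + ‖u₂‖ ^ 2)) :
    ∃ κ₀ > 0, ∃ α > 0, ∀ κ ≥ κ₀, ∀ (u₁ : U₁) (u₂ : U₂),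
      α * (‖u₁‖ ^ 2 + ‖u₂‖ ^ 2) ≤
        κ * ‖B u₁‖ ^ 2 + c u₂ u₂ + d (u₁, u₂) (u₁, u₂) :=
  abstract_coercivity_general B c d T E C₁ C₂ C₃ hC₂ hi hii
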